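/- With p timelike, w ∈ p^⊥ nonzero, q timelike with ⟨p,q⟩ ≠ 0, and w' := w - (⟨w,q⟩/⟨p,q⟩)p, one has the identity ta(p,q) = ta(w,w') provided p, q, w span a subspace in which w' ≠ 0. Consequently ℓ_p/ℓ_q = √(ta(p,q)) in the coplanar case, i.e. the length-contraction factor equals the Lorentz factor. -/

import Mathlib

/-!
The Gram determinant of the dependent triple `p, q, w` vanishes; since `⟨w,p⟩ = 0` this reads
`⟨p,p⟩⟨q,q⟩⟨w,w⟩ = ⟨p,p⟩⟨w,q⟩² + ⟨p,q⟩²⟨w,w⟩`, which is exactly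
`⟨w',w'⟩ = ⟨p,p⟩⟨q,q⟩⟨w,w⟩ / ⟨p,q⟩²`. Together with `⟨w,w'⟩ = ⟨w,w⟩` both tances equal
`⟨w,w⟩ / ⟨w',w'⟩`, and `⟨w,w⟩ > 0` because a nonzero vector orthogonal to a timelike one is spacelike.
-/

noncomputable def mdot {n : ℕ} (p q : Fin (n + 1) → ℝ) : ℝ :=
  (∑ i, p i * q i) - 2 * (p 0 * q 0)

noncomputable def tance {n : ℕ} (p q : Fin (n + 1) → ℝ) : ℝ :=
  (mdot p q) ^ 2 / (mdot p p * mdot q q)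

theorem LinearMap.BilinForm.det_gram_eq_zero_of_not_linearIndependent {K M ι : Type*} [Field K]
    [AddCommGroup M] [Module K M] [Fintype ι] [DecidableEq ι] (B : LinearMap.BilinForm K M)
    {v : ι → M} (hv : ¬ LinearIndependent K v) :
    (Matrix.of fun i j => B (v i) (v j)).det = 0 := by
  obtain ⟨g, hg, i, hgi⟩ := Fintype.not_linearIndependent_iff.mp hv
  refine Matrix.exists_mulVec_eq_zero_iff.mp ⟨g, fun h => hgi (congrFun h i), ?_⟩
  ext i
  simpa [Matrix.mulVec, dotProduct, mul_comm] using congrArg (B (v i)) hg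

section Minkowski

variable {n : ℕ}

theorem mdot_comm (p q : Fin (n + 1) → ℝ) : mdot p q = mdot q p := by
  simp only [mdot, mul_comm]

theorem mdot_eq_tail_dotProduct_sub (p q : Fin (n + 1) → ℝ) :
    mdot p q = Fin.tail p ⬝ᵥ Fin.tail q - p 0 * q 0 := by
  rw [mdot, Fin.sum_univ_succ, dotProduct]
  simp only [Fin.tail]
  ring

theorem mdot_self_pos_of_mdot_eq_zero {p w : Fin (n + 1) → ℝ} (hp : mdot p p < 0)
    (hwp : mdot w p = 0) (hw : w ≠ 0) : 0 < mdot w w := by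
  rw [mdot_eq_tail_dotProduct_sub] at hp hwp ⊢
  set u := Fin.tail w
  set v := Fin.tail p
  have hcs : (u ⬝ᵥ v) ^ 2 ≤ (u ⬝ᵥ u) * (v ⬝ᵥ v) := by
    simpa only [dotProduct, sq] using Finset.sum_mul_sq_le_sq_mul_sq Finset.univ u v
  have huu : 0 ≤ u ⬝ᵥ u := Fintype.sum_nonneg fun i => mul_self_nonneg (u i)
  have hvv : 0 ≤ v ⬝ᵥ v := Fintype.sum_nonneg fun i => mul_self_nonneg (v i)
  by_contra! hww
  have hw0 : w 0 = 0 := by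
    have : (w 0 * p 0) ^ 2 ≤ w 0 ^ 2 * (v ⬝ᵥ v) := by
      rw [← sub_eq_zero.mp hwp]
      exact hcs.trans (mul_le_mul_of_nonneg_right (by linarith) hvv)
    have hsq : w 0 ^ 2 * (p 0 ^ 2 - v ⬝ᵥ v) ≤ 0 := by linear_combination this
    exact pow_eq_zero_iff two_ne_zero |>.mp <|
      le_antisymm (nonpos_of_mul_nonpos_left hsq (by linarith)) (sq_nonneg _)
  have hu : u = 0 := dotProduct_self_eq_zero.mp (by rw [hw0] at hww; linarith)
  exact hw (funext fun i => Fin.cases hw0 (congrFun hu) i)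

noncomputable def minkowskiForm (n : ℕ) : LinearMap.BilinForm ℝ (Fin (n + 1) → ℝ) :=
  LinearMap.mk₂ ℝ mdot
    (fun p p' q => by simp only [mdot, Pi.add_apply, add_mul, Finset.sum_add_distrib]; ring)
    (fun c p q => by
      simp only [mdot, Pi.smul_apply, smul_eq_mul, mul_assoc, ← Finset.mul_sum]; ring)
    (fun p q q' => by simp only [mdot, Pi.add_apply, mul_add, Finset.sum_add_distrib]; ring)
    (fun c p q => by
      simp only [mdot, Pi.smul_apply, smul_eq_mul, mul_left_comm _ c, ← Finset.mul_sum]; ring)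

@[simp]
theorem minkowskiForm_apply (p q : Fin (n + 1) → ℝ) : minkowskiForm n p q = mdot p q := rfl

theorem mdot_sub_smul_self {p w : Fin (n + 1) → ℝ} (hwp : mdot w p = 0) (t : ℝ) :
    mdot (w - t • p) (w - t • p) = mdot w w + t ^ 2 * mdot p p := by
  simp only [← minkowskiForm_apply, map_sub, map_smul, LinearMap.sub_apply,
    LinearMap.smul_apply, smul_eq_mul]
  simp only [minkowskiForm_apply, mdot_comm p w, hwp]
  ring

theorem mdot_sub_smul_right {p w : Fin (n + 1) → ℝ} (hwp : mdot w p = 0) (t : ℝ) :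
    mdot w (w - t • p) = mdot w w := by
  simp only [← minkowskiForm_apply, map_sub, map_smul, smul_eq_mul]
  simp [hwp]

theorem mdot_gram_relation_of_not_linearIndependent {p q w : Fin (n + 1) → ℝ}
    (hdep : ¬ LinearIndependent ℝ ![p, q, w]) (hwp : mdot w p = 0) :
    mdot p p * mdot q q * mdot w w = mdot p p * mdot w q ^ 2 + mdot p q ^ 2 * mdot w w := by
  have hdet := (minkowskiForm n).det_gram_eq_zero_of_not_linearIndependent hdep
  rw [Matrix.det_fin_three] at hdet
  simp only [minkowskiForm_apply, Matrix.of_apply, Matrix.cons_val_zero, Matrix.cons_val_one,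
    Matrix.cons_val, mdot_comm q w, mdot_comm q p, mdot_comm p w, hwp, mul_zero, zero_mul,
    add_zero, sub_zero] at hdet
  linear_combination hdet

end Minkowski

theorem tance_eq_tance_rod_general {n : ℕ} (p q w : Fin (n + 1) → ℝ)
    (hp : mdot p p < 0) (hq : mdot q q < 0)
    (hw : w ≠ 0) (hwp : mdot w p = 0) (hpq : mdot p q ≠ 0)
    (hdep : ¬ LinearIndependent ℝ ![p, q, w]) :
    tance p q = tance w (w - (mdot w q / mdot p q) • p) ∧
    Real.sqrt (mdot w w) /
        Real.sqrt (mdot (w - (mdot w q / mdot p q) • p) (w - (mdot w q / mdot p q) • p))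
      = Real.sqrt (tance p q) := by
  set w' := w - (mdot w q / mdot p q) • p
  have hww : 0 < mdot w w := mdot_self_pos_of_mdot_eq_zero hp hwp hw
  have hw'w' : mdot w' w' = mdot p p * mdot q q * mdot w w / mdot p q ^ 2 := by
    rw [mdot_sub_smul_self hwp, mdot_gram_relation_of_not_linearIndependent hdep hwp]
    field_simp
    ring
  have htance_pq : tance p q = mdot w w / mdot w' w' := by
    rw [hw'w', tance]
    field_simp [hp.ne, hq.ne, hww.ne']
  have htance_ww' : tance w w' = mdot w w / mdot w' w' := by
    rw [tance, mdot_sub_smul_right hwp, sq, mul_div_mul_left _ _ hww.ne']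
  exact ⟨htance_pq.trans htance_ww'.symm, by rw [htance_pq, Real.sqrt_div hww.le]⟩

/-- `ta(p,q) = ta(w,w')` in the coplanar case, hence
`ℓ_p/ℓ_q = √(ta(p,q))`, the Lorentz factor. -/
theorem tance_eq_tance_rod {n : ℕ} (p q w : Fin (n + 1) → ℝ)
    (hp : mdot p p < 0) (hq : mdot q q < 0)
    (hw : w ≠ 0) (hwp : mdot w p = 0) (hpq : mdot p q ≠ 0)
    (hdep : ¬ LinearIndependent ℝ ![p, q, w])
    (hw' : w - (mdot w q / mdot p q) • p ≠ 0) :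
    tance p q = tance w (w - (mdot w q / mdot p q) • p) ∧
    Real.sqrt (mdot w w) /
        Real.sqrt (mdot (w - (mdot w q / mdot p q) • p) (w - (mdot w q / mdot p q) • p))
      = Real.sqrt (tance p q) :=
  tance_eq_tance_rod_general p q w hp hq hw hwp hpq hdep
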